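/- arXiv:2112.08710 — 4 statements merged into one kernel-verified Lean document; each statement's English description precedes it below -/
import Mathlib

section
/- With the multiplication law φ_x(t,t') := H_x(K_x(t) + K_{x'}(t')), x' = x + K_x(t), define γ_x := ∂∂'φ_x(0,0) (the mixed second derivative of φ_x at (0,0)). Then γ_x(l, l') = h_x(Γ_x(k_x(l), k_x(l')) + (e_x k_x)(l, l')), where k_x := DK_x(0), h_x := k_x^{-1}, Γ_x := k_x ∘ D²H_x(0), and e_x := k_x · ∂_x denotes differentiation in direction k_x(l) applied to the x-dependence of k_x. -/
/-- formula (16) for γ_x = ∂∂'φ_x(0,0) of the deformed group of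
diffeomorphisms: γ_x⟨l,l'⟩ = h_x⟨Γ_x⟨k_x l, k_x l'⟩ + (e_x k_x)⟨l,l'⟩⟩, where
Γ_x = k_x ∘ D²H_x(0), k_x = DK_x(0), h_x = k_x⁻¹ and e_x k_x is the directional
derivative of the frame field in direction k_x⟨l⟩. -/
theorem deformed_group_gamma_formula
    {T : Type*} [NormedAddCommGroup T] [NormedSpace ℝ T] [FiniteDimensional ℝ T]
    (X : Set T) (hX : IsOpen X)
    (H K : T → T → T)
    (hHsmooth : ContDiff ℝ (⊤ : ℕ∞) (fun p : T × T => H p.1 p.2))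
    (hKsmooth : ContDiff ℝ (⊤ : ℕ∞) (fun p : T × T => K p.1 p.2))
    (hinv : ∀ x, Function.LeftInverse (K x) (H x) ∧ Function.RightInverse (K x) (H x))
    (hH0 : ∀ x, H x 0 = 0)
    (φ : T → T → T → T)
    (hφ : ∀ x t t', φ x t t' = H x (K x t + K (x + K x t) t'))
    (k h : T → T →L[ℝ] T)
    (hk : ∀ x, k x = fderiv ℝ (K x) 0)
    (hh : ∀ x, (h x).comp (k x) = ContinuousLinearMap.id ℝ T ∧
               (k x).comp (h x) = ContinuousLinearMap.id ℝ T) :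
    ∀ x ∈ X, ∀ l l' : T,
      (fderiv ℝ (fun t => (fderiv ℝ (fun t' => φ x t t') 0) l') 0) l
        = h x (k x (((fderiv ℝ (fun u => fderiv ℝ (H x) u) 0) (k x l)) (k x l'))
               + (fderiv ℝ (fun y => (fderiv ℝ (K y) 0) l') x) (k x l)) := by
  intro x _hx l l'
  -- smoothness of slices
  have hKC : ∀ y, ContDiff ℝ (⊤ : ℕ∞) (K y) := fun y =>
    hKsmooth.comp (ContDiff.prodMk contDiff_const contDiff_id)
  have hHC : ∀ y, ContDiff ℝ (⊤ : ℕ∞) (H y) := fun y =>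
    hHsmooth.comp (ContDiff.prodMk contDiff_const contDiff_id)
  -- K y 0 = 0
  have hK0 : ∀ y, K y 0 = 0 := by
    intro y
    have := (hinv y).1 0
    rwa [hH0 y] at this
  -- smoothness of the frame field y ↦ DK_y(0)
  have hkf : ContDiff ℝ (⊤ : ℕ∞) (fun y : T => fderiv ℝ (K y) 0) :=
    hKsmooth.fderiv (contDiff_const : ContDiff ℝ (⊤ : ℕ∞) (fun _ : T => (0 : T))) (by simp)
  -- h x = DH_x(0)
  have hhx : h x = fderiv ℝ (H x) 0 := by
    have h1 : (k x).comp (fderiv ℝ (H x) 0) = ContinuousLinearMap.id ℝ T := by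
      rw [hk]
      have hdH : DifferentiableAt ℝ (H x) 0 := ((hHC x).differentiable (by simp)).differentiableAt
      have hdK : DifferentiableAt ℝ (K x) (H x 0) := ((hKC x).differentiable (by simp)).differentiableAt
      have hcomp := fderiv_comp 0 hdK hdH
      rw [hH0 x] at hcomp
      rw [show (K x ∘ H x) = id from funext (hinv x).1, fderiv_id] at hcomp
      exact hcomp.symm
    calc h x = (h x).comp (ContinuousLinearMap.id ℝ T) := by ext v; simp
      _ = (h x).comp ((k x).comp (fderiv ℝ (H x) 0)) := by rw [h1]
      _ = ((h x).comp (k x)).comp (fderiv ℝ (H x) 0) := by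
          rw [ContinuousLinearMap.comp_assoc]
      _ = fderiv ℝ (H x) 0 := by rw [(hh x).1]; ext v; simp
  -- Step A: the inner derivative
  have stepA : (fun t => (fderiv ℝ (fun t' => φ x t t') 0) l')
      = (fun t => (fderiv ℝ (H x) (K x t)) ((fderiv ℝ (K (x + K x t)) 0) l')) := by
    funext t
    have hinner : HasFDerivAt (fun t' => K x t + K (x + K x t) t')
        (fderiv ℝ (K (x + K x t)) 0) 0 :=
      (((hKC (x + K x t)).differentiable (by simp) 0).hasFDerivAt).const_add (K x t)
    have houter : HasFDerivAt (H x) (fderiv ℝ (H x) (K x t))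
        ((fun t' => K x t + K (x + K x t) t') 0) := by
      simp only [hK0 (x + K x t), add_zero]
      exact ((hHC x).differentiable (by simp) (K x t)).hasFDerivAt
    have hcomp : HasFDerivAt (fun t' => H x (K x t + K (x + K x t) t'))
        ((fderiv ℝ (H x) (K x t)).comp (fderiv ℝ (K (x + K x t)) 0)) 0 :=
      houter.comp 0 hinner
    have hφfun : (fun t' => φ x t t') = (fun t' => H x (K x t + K (x + K x t) t')) :=
      funext fun t' => hφ x t t'
    rw [hφfun, hcomp.fderiv]
    rfl
  -- derivative data for the outer derivative
  have hKd : HasFDerivAt (K x) (fderiv ℝ (K x) 0) 0 :=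
    ((hKC x).differentiable (by simp) 0).hasFDerivAt
  have hHf2 : HasFDerivAt (fderiv ℝ (H x)) (fderiv ℝ (fun u => fderiv ℝ (H x) u) 0) (K x 0) := by
    rw [hK0 x]
    exact ((((hHC x).fderiv_right (m := 1) (WithTop.coe_le_coe.mpr le_top)).differentiable (by simp)) 0).hasFDerivAt
  have hc : HasFDerivAt (fun t => fderiv ℝ (H x) (K x t))
      ((fderiv ℝ (fun u => fderiv ℝ (H x) u) 0).comp (fderiv ℝ (K x) 0)) 0 :=
    hHf2.comp 0 hKd
  have hw : HasFDerivAt (fun y => (fderiv ℝ (K y) 0) l')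
      (fderiv ℝ (fun y => (fderiv ℝ (K y) 0) l') x) (x + K x 0) := by
    rw [hK0 x, add_zero]
    exact ((hkf.clm_apply contDiff_const).differentiable (by simp) x).hasFDerivAt
  have hu : HasFDerivAt (fun t => (fderiv ℝ (K (x + K x t)) 0) l')
      ((fderiv ℝ (fun y => (fderiv ℝ (K y) 0) l') x).comp (fderiv ℝ (K x) 0)) 0 :=
    HasFDerivAt.comp (g := fun y => (fderiv ℝ (K y) 0) l') 0 hw (hKd.const_add x)
  have hfd : fderiv ℝ (fun t => (fderiv ℝ (H x) (K x t)) ((fderiv ℝ (K (x + K x t)) 0) l')) 0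
      = (fderiv ℝ (H x) (K x 0)).comp
          ((fderiv ℝ (fun y => (fderiv ℝ (K y) 0) l') x).comp (fderiv ℝ (K x) 0))
        + ((fderiv ℝ (fun u => fderiv ℝ (H x) u) 0).comp (fderiv ℝ (K x) 0)).flip
            ((fderiv ℝ (K (x + K x 0)) 0) l') :=
    HasFDerivAt.fderiv (by exact hc.clm_apply hu)
  have hcancel : ∀ v, h x (k x v) = v := fun v => by
    have := ContinuousLinearMap.ext_iff.mp (hh x).1 v
    simpa using this
  rw [stepA, hfd]
  simp only [hK0 x, add_zero, ContinuousLinearMap.add_apply, ContinuousLinearMap.comp_apply,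
    ContinuousLinearMap.flip_apply, ← hk x, ← hhx, map_add]
  rw [hcancel]
  exact add_comm _ _
end

section
/- Define the structure operator C_x⟨l,l'⟩ := γ_x⟨l,l'⟩ − γ_x⟨l',l⟩ where γ_x := ∂∂'φ_x(0,0) for the deformed diffeomorphism group multiplication φ_x(t,t') = H_x(K_x(t)+K_{x'}(t')). Then the generators e_x := k_x·∂_x satisfy the anholonomy relation: (e_x k_x)⟨l,l'⟩ − (e_x k_x)⟨l',l⟩ = k_x⟨C_x⟨l,l'⟩⟩, i.e. the Lie bracket of the vector fields x ↦ k_x⟨l⟩ and x ↦ k_x⟨l'⟩ equals k_x⟨C_x⟨l,l'⟩⟩. -/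
/-- the structure operator C_x⟨l,l'⟩ = γ_x⟨l,l'⟩ − γ_x⟨l',l⟩ of the
deformed group of diffeomorphisms is the anholonomic object of the frame field
e_x = k_x·∂_x : the Lie bracket of the vector fields x ↦ k_x⟨l⟩ and x ↦ k_x⟨l'⟩
equals k_x⟨C_x⟨l,l'⟩⟩ (equation (9) of the paper). -/
theorem structure_operator_is_anholonomic_object
    {T : Type*} [NormedAddCommGroup T] [NormedSpace ℝ T] [FiniteDimensional ℝ T]
    (X : Set T) (hX : IsOpen X)
    (H K : T → T → T)
    (hHsmooth : ContDiff ℝ (⊤ : ℕ∞) (fun p : T × T => H p.1 p.2))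
    (hKsmooth : ContDiff ℝ (⊤ : ℕ∞) (fun p : T × T => K p.1 p.2))
    (hinv : ∀ x, Function.LeftInverse (K x) (H x) ∧ Function.RightInverse (K x) (H x))
    (hH0 : ∀ x, H x 0 = 0)
    (φ : T → T → T → T)
    (hφ : ∀ x t t', φ x t t' = H x (K x t + K (x + K x t) t'))
    (k : T → T →L[ℝ] T)
    (hk : ∀ x, k x = fderiv ℝ (K x) 0)
    (γ : T → T → T → T)
    (hγ : ∀ x l l', γ x l l' = (fderiv ℝ (fun t => (fderiv ℝ (fun t' => φ x t t') 0) l') 0) l)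
    (C : T → T → T → T)
    (hC : ∀ x l l', C x l l' = γ x l l' - γ x l' l) :
    ∀ x ∈ X, ∀ l l' : T,
      (fderiv ℝ (fun y => (k y) l') x) (k x l) - (fderiv ℝ (fun y => (k y) l) x) (k x l')
        = k x (C x l l') := by
  intro x _hx l l'
  -- basic facts
  have hK0 : ∀ y : T, K y 0 = 0 := fun y => by
    have h1 := (hinv y).1 (0 : T)
    rwa [hH0 y] at h1
  have hKc : ∀ y : T, ContDiff ℝ (⊤ : ℕ∞) (K y) := fun y =>
    hKsmooth.comp (contDiff_const.prodMk contDiff_id)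
  have hHc : ∀ y : T, ContDiff ℝ (⊤ : ℕ∞) (H y) := fun y =>
    hHsmooth.comp (contDiff_const.prodMk contDiff_id)
  have hKd : ∀ y : T, Differentiable ℝ (K y) := fun y => (hKc y).differentiable (by simp)
  have hHd : ∀ y : T, Differentiable ℝ (H y) := fun y => (hHc y).differentiable (by simp)
  have hk0d : HasFDerivAt (K x) (fderiv ℝ (K x) 0) 0 := (hKd x 0).hasFDerivAt
  -- smoothness of y ↦ fderiv ℝ (K y) 0
  have hksm : ContDiff ℝ (⊤ : ℕ∞) (fun y : T => fderiv ℝ (K y) 0) :=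
    hKsmooth.fderiv contDiff_const (by simp)
  -- derivative in t' of φ x t t' at 0
  have hψ : ∀ t : T, fderiv ℝ (fun t' => φ x t t') 0
      = (fderiv ℝ (H x) (K x t)).comp (fderiv ℝ (K (x + K x t)) 0) := by
    intro t
    have h1 : HasFDerivAt (fun t' : T => K x t + K (x + K x t) t')
        (fderiv ℝ (K (x + K x t)) 0) 0 :=
      ((hKd _ 0).hasFDerivAt).const_add (K x t)
    have h2 : HasFDerivAt (H x) (fderiv ℝ (H x) (K x t)) (K x t + K (x + K x t) 0) := by
      rw [hK0, add_zero]
      exact (hHd x _).hasFDerivAt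
    have h3 := h2.comp (0 : T) h1
    have h4 : (fun t' : T => φ x t t') = fun t' => H x (K x t + K (x + K x t) t') := by
      funext t'; exact hφ x t t'
    rw [h4]
    exact h3.fderiv
  set H₂ := fderiv ℝ (fderiv ℝ (H x)) 0 with hH₂
  have hfHc : ContDiff ℝ (⊤ : ℕ∞) (fderiv ℝ (H x)) := (hHc x).fderiv_right (by simp)
  have hA : HasFDerivAt (fun t => fderiv ℝ (H x) (K x t))
      (H₂.comp (fderiv ℝ (K x) 0)) 0 := by
    have h2 : HasFDerivAt (fderiv ℝ (H x)) H₂ (K x 0) := by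
      rw [hK0]
      exact ((hfHc.differentiable (by simp)) 0).hasFDerivAt
    exact h2.comp 0 hk0d
  -- the key formula for γ
  have hγf : ∀ u v : T, γ x u v
      = fderiv ℝ (H x) 0 ((fderiv ℝ (fun y => fderiv ℝ (K y) 0 v) x) (fderiv ℝ (K x) 0 u))
        + H₂ (fderiv ℝ (K x) 0 u) (fderiv ℝ (K x) 0 v) := by
    intro u v
    have hB : HasFDerivAt (fun t => fderiv ℝ (K (x + K x t)) 0 v)
        ((fderiv ℝ (fun y => fderiv ℝ (K y) 0 v) x).comp (fderiv ℝ (K x) 0)) 0 := by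
      have ha : HasFDerivAt (fun t => x + K x t) (fderiv ℝ (K x) 0) 0 :=
        hk0d.const_add x
      have hg : HasFDerivAt (fun y => fderiv ℝ (K y) 0 v)
          (fderiv ℝ (fun y => fderiv ℝ (K y) 0 v) x) (x + K x 0) := by
        rw [hK0, add_zero]
        exact (((hksm.clm_apply contDiff_const).differentiable (by simp)) x).hasFDerivAt
      exact hg.comp 0 ha
    have hF := hA.clm_apply hB
    have hF' : HasFDerivAt (fun t => (fderiv ℝ (fun t' => φ x t t') 0) v)
        ((fderiv ℝ (H x) (K x 0)).comp
            ((fderiv ℝ (fun y => fderiv ℝ (K y) 0 v) x).comp (fderiv ℝ (K x) 0))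
          + (H₂.comp (fderiv ℝ (K x) 0)).flip (fderiv ℝ (K (x + K x 0)) 0 v)) 0 :=
      hF.congr_of_eventuallyEq (Filter.Eventually.of_forall fun t => by simp only [hψ t]; rfl)
    rw [hγ, hF'.fderiv]
    simp only [ContinuousLinearMap.add_apply, ContinuousLinearMap.coe_comp',
      Function.comp_apply, ContinuousLinearMap.flip_apply, hK0, add_zero]
  -- symmetry of the second derivative of H x
  have hsym : ∀ u v : T, H₂ u v = H₂ v u := fun u v =>
    second_derivative_symmetric (f := H x) (fun y => ((hHd x) y).hasFDerivAt)
      (((hfHc.differentiable (by simp)) 0).hasFDerivAt) u v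
  -- k x inverts the derivative of H x at 0
  have hkH : ∀ z : T, fderiv ℝ (K x) 0 (fderiv ℝ (H x) 0 z) = z := by
    have hHx0 : HasFDerivAt (H x) (fderiv ℝ (H x) 0) 0 := (hHd x 0).hasFDerivAt
    have hKx0 : HasFDerivAt (K x) (fderiv ℝ (K x) 0) (H x 0) := by
      rw [hH0]; exact hk0d
    have hcomp := hKx0.comp 0 hHx0
    have hid : HasFDerivAt (fun s : T => K x (H x s)) (ContinuousLinearMap.id ℝ T) 0 := by
      have he : (fun s : T => K x (H x s)) = id := funext fun s => (hinv x).1 s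
      rw [he]; exact hasFDerivAt_id 0
    have huniq := hid.unique hcomp
    intro z
    have hz := congrArg (fun (L : T →L[ℝ] T) => L z) huniq
    simpa using hz.symm
  -- put everything together
  simp only [hk]
  rw [hC, hγf l l', hγf l' l,
    hsym (fderiv ℝ (K x) 0 l') (fderiv ℝ (K x) 0 l),
    add_sub_add_right_eq_sub, ← map_sub, hkH]
end

section
/- Let Γ_x be a smooth symmetric bilinear map on ℝⁿ and H_x a canonical deformation map for Γ (satisfying the PDE of canonicity with H_x(0)=0, ∂_{x'}H_x(0)=h_x). Then for a geodesic x(s) with initial data x(0)=x, ẋ(0) = k_x⟨τ⟩ (where k_x = h_x^{-1}), the parameter t(s) := H_x(x(s) − x) equals s·τ for all s in the interval of existence. -/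
/-- Proposition 1: for a canonical deformation map H (satisfying the
canonicity PDE with H(0)=0 and ∂_{x'}H_x(0) = h_x), along the geodesic with initial
data x(0) = x, ẋ(0) = k_x⟨τ⟩ (k_x = h_x⁻¹), the group parameter t(s) = H_x(x(s) − x)
equals s·τ. -/
theorem canonical_parameter_along_geodesic (n : ℕ)
    (Γ : EuclideanSpace ℝ (Fin n) →
      EuclideanSpace ℝ (Fin n) →L[ℝ] EuclideanSpace ℝ (Fin n) →L[ℝ] EuclideanSpace ℝ (Fin n))
    (hΓsmooth : ContDiff ℝ (⊤ : ℕ∞) Γ)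
    (hΓsym : ∀ y a b, Γ y a b = Γ y b a)
    (x τ : EuclideanSpace ℝ (Fin n))
    (H : EuclideanSpace ℝ (Fin n) → EuclideanSpace ℝ (Fin n))
    (hHsmooth : ContDiff ℝ (⊤ : ℕ∞) H)
    (hH0 : H 0 = 0)
    (h : EuclideanSpace ℝ (Fin n) ≃L[ℝ] EuclideanSpace ℝ (Fin n))
    (hDH0 : fderiv ℝ H 0 = (h : EuclideanSpace ℝ (Fin n) →L[ℝ] EuclideanSpace ℝ (Fin n)))
    (hPDE : ∀ y θ,
      (fderiv ℝ (fun z => fderiv ℝ H (z - x) θ) y) θ = fderiv ℝ H (y - x) (Γ y θ θ))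
    (c : ℝ → EuclideanSpace ℝ (Fin n))
    (hcsmooth : ContDiff ℝ (⊤ : ℕ∞) c)
    (hc0 : c 0 = x)
    (hdc0 : deriv c 0 = h.symm τ)
    (hgeo : ∀ s, deriv (deriv c) s = - Γ (c s) (deriv c s) (deriv c s)) :
    ∀ s : ℝ, H (c s - x) = s • τ := by
  have hc' : ∀ s, HasDerivAt c (deriv c s) s := fun s =>
    ((hcsmooth.differentiable (by simp)) s).hasDerivAt
  have hdcsmooth : ContDiff ℝ (⊤ : ℕ∞) (deriv c) := by
    have h2 : ContDiff ℝ (⊤ : ℕ∞) (fun s => fderiv ℝ c s 1) :=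
      (hcsmooth.fderiv_right (by simp)).clm_apply contDiff_const
    have he : deriv c = fun s => fderiv ℝ c s 1 := funext fun s => fderiv_apply_one_eq_deriv.symm
    rw [he]; exact h2
  have hc'' : ∀ s, HasDerivAt (deriv c) (deriv (deriv c) s) s := fun s =>
    ((hdcsmooth.differentiable (by simp)) s).hasDerivAt
  have hHd : ∀ z, HasFDerivAt H (fderiv ℝ H z) z := fun z =>
    ((hHsmooth.differentiable (by simp)) z).hasFDerivAt
  have hDsmooth : ContDiff ℝ (⊤ : ℕ∞) (fderiv ℝ H) := hHsmooth.fderiv_right (by simp)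
  have hDd : ∀ z, HasFDerivAt (fderiv ℝ H) (fderiv ℝ (fderiv ℝ H) z) z := fun z =>
    ((hDsmooth.differentiable (by simp)) z).hasFDerivAt
  have hsub : ∀ s, HasDerivAt (fun s => c s - x) (deriv c s) s := fun s => (hc' s).sub_const x
  -- derivative of the parameter map
  have hf' : ∀ s, HasDerivAt (fun s => H (c s - x)) (fderiv ℝ H (c s - x) (deriv c s)) s :=
    fun s => (hHd (c s - x)).comp_hasDerivAt s (hsub s)
  -- key consequence of the PDE
  have key : ∀ s, (fderiv ℝ (fderiv ℝ H) (c s - x) (deriv c s)) (deriv c s)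
      = fderiv ℝ H (c s - x) (Γ (c s) (deriv c s) (deriv c s)) := by
    intro s
    set θ := deriv c s with hθ
    have hzsub : HasFDerivAt (fun z : EuclideanSpace ℝ (Fin n) => z - x)
        (ContinuousLinearMap.id ℝ (EuclideanSpace ℝ (Fin n))) (c s) := by
      simpa using (hasFDerivAt_id (c s)).sub_const x
    have hcomp := (hDd (c s - x)).comp (c s) hzsub
    have happ := hcomp.clm_apply (hasFDerivAt_const θ (c s))
    simp only [Function.comp_def] at happ
    have hP := hPDE (c s) θ
    rw [happ.fderiv] at hP
    simpa using hP
  -- g has zero derivative everywhere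
  set g : ℝ → EuclideanSpace ℝ (Fin n) := fun s => fderiv ℝ H (c s - x) (deriv c s) with hg
  have hg' : ∀ s, HasDerivAt g 0 s := by
    intro s
    have hF := ((hDd (c s - x)).comp (c s) (show HasFDerivAt (fun z : EuclideanSpace ℝ (Fin n) => z - x)
        (ContinuousLinearMap.id ℝ (EuclideanSpace ℝ (Fin n))) (c s) by
      simpa using (hasFDerivAt_id (c s)).sub_const x)).comp_hasDerivAt s (hc' s)
    have hgs := hF.clm_apply (hc'' s)
    simp only [Function.comp_def] at hgs
    have hzero : (((fderiv ℝ (fderiv ℝ H) (c s - x)).comp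
          (ContinuousLinearMap.id ℝ (EuclideanSpace ℝ (Fin n)))) (deriv c s)) (deriv c s)
        + fderiv ℝ H (c s - x) (deriv (deriv c) s) = 0 := by
      simp only [ContinuousLinearMap.comp_apply, ContinuousLinearMap.coe_id', id_eq]
      rw [key s, hgeo s, map_neg, add_neg_cancel]
    rw [hzero] at hgs
    exact hgs
  -- hence g is constant, equal to τ
  have hgconst : ∀ s, g s = τ := by
    intro s
    have hdiff : Differentiable ℝ g := fun s => (hg' s).differentiableAt
    have hzero : ∀ s, deriv g s = 0 := fun s => (hg' s).deriv
    have hc := is_const_of_deriv_eq_zero hdiff hzero s 0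
    rw [hc]
    show fderiv ℝ H (c 0 - x) (deriv c 0) = τ
    rw [hc0, sub_self, hdc0, hDH0]
    simp
  -- conclude
  intro s
  have hφ : ∀ s, HasDerivAt (fun s => H (c s - x) - s • τ) 0 s := by
    intro s
    have h1 := (hf' s).sub ((hasDerivAt_id s).smul_const τ)
    have h2 : fderiv ℝ H (c s - x) (deriv c s) = g s := rfl
    rw [h2, hgconst s] at h1
    simpa [Pi.sub_def] using h1
  have hdiff : Differentiable ℝ (fun s => H (c s - x) - s • τ) := fun s =>
    (hφ s).differentiableAt
  have hzero : ∀ s, deriv (fun s => H (c s - x) - s • τ) s = 0 := fun s => (hφ s).deriv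
  have hcst := is_const_of_deriv_eq_zero hdiff hzero s 0
  simp only [hc0, sub_self, hH0, zero_smul, sub_zero] at hcst
  have h2 : H (c s - x) - s • τ = 0 := hcst
  linear_combination (norm := module) h2
end

section
/- Let X be an open subset of ℝⁿ with a torsion-free affine connection ∇ (covariant derivative on vector fields given by Γ_x), and suppose for every vector field θ and every geodesic segment the finite λ-transport operator λ_x(sτ) satisfies the composition law λ_x((s+s')τ_x)⟨θ⟩ = λ_x(sτ_x)⟨λ_{x'}(s'τ_{x'})⟨θ⟩⟩ for all transversal vectors θ, where λ_x(t) := ∂'φ_x(t,0) for the canonical deformed diffeomorphism group. Then the curvature tensor R of the connection vanishes identically. -/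
/-- if, for the canonical deformed group of diffeomorphisms, the finite
λ-transport λ_x(t) = ∂'φ_x(t,0) satisfies the composition law
λ_x((s+s')τ_x)⟨θ⟩ = λ_x(sτ_x)⟨λ_{x'}(s'τ_{x'})⟨θ⟩⟩ for arbitrary vectors θ, then the
curvature operator R_x (the antisymmetric part of ρ_x = ∂∂'²φ_x(0,0)) vanishes
identically, i.e. the space is flat. -/
theorem lambda_transport_composition_implies_flat
    {T : Type*} [NormedAddCommGroup T] [NormedSpace ℝ T] [FiniteDimensional ℝ T]
    (H K : T → T → T)
    (hHsmooth : ContDiff ℝ (⊤ : ℕ∞) (fun p : T × T => H p.1 p.2))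
    (hKsmooth : ContDiff ℝ (⊤ : ℕ∞) (fun p : T × T => K p.1 p.2))
    (hinv : ∀ x, Function.LeftInverse (K x) (H x) ∧ Function.RightInverse (K x) (H x))
    (hH0 : ∀ x, H x 0 = 0)
    (φ : T → T → T → T)
    (hφ : ∀ x t t', φ x t t' = H x (K x t + K (x + K x t) t'))
    (lam : T → T → T →L[ℝ] T)
    (hlam : ∀ x t, lam x t = fderiv ℝ (fun t' => φ x t t') 0)
    -- τfun x τ s is the tangent vector τ_{x'} to the geodesic at x' = x + K_x(sτ);
    -- by criterion (19) it satisfies λ_x(sτ)⟨τ_{x'}⟩ = τ: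
    (τfun : T → T → ℝ → T)
    (hτfun : ∀ x τ s, lam x (s • τ) (τfun x τ s) = τ)
    -- canonicity: translations along a geodesic compose additively:
    (hcan : ∀ (x τ : T) (s s' : ℝ), φ x (s • τ) (s' • τfun x τ s) = (s + s') • τ)
    -- composition law of λ-transports for arbitrary (transversal) vectors θ:
    (hcomp : ∀ (x τ : T) (s s' : ℝ) (θ : T),
      lam x ((s + s') • τ) θ = lam x (s • τ) (lam (x + K x (s • τ)) (s' • τfun x τ s) θ))
    (ρ : T → T → T → T → T)
    (hρ : ∀ x l a b, ρ x l a b =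
      (fderiv ℝ (fun t => ((fderiv ℝ (fun t' => fderiv ℝ (fun u => φ x t u) t') 0) a) b) 0) l) :
    ∀ x t l l' : T, ρ x l l' t - ρ x l' l t = 0 := by
  -- smoothness of the slices of H and K
  have hHy : ∀ y, ContDiff ℝ (⊤ : ℕ∞) (H y) := fun y =>
    hHsmooth.comp (contDiff_const.prodMk contDiff_id)
  have hKy : ∀ y, ContDiff ℝ (⊤ : ℕ∞) (K y) := fun y =>
    hKsmooth.comp (contDiff_const.prodMk contDiff_id)
  -- K y 0 = 0
  have hK0 : ∀ y, K y 0 = 0 := by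
    intro y; have := (hinv y).1 0; rwa [hH0 y] at this
  -- φ x t 0 = t and φ x 0 t' = t'
  have hφt0 : ∀ x t, φ x t 0 = t := by
    intro x t; rw [hφ, hK0, add_zero, (hinv x).2]
  have hφ0t : ∀ x t', φ x 0 t' = t' := by
    intro x t'; rw [hφ, hK0, zero_add, add_zero, (hinv x).2]
  -- joint smoothness of (t,t') ↦ φ x t t'
  have hφ2 : ∀ x, ContDiff ℝ (⊤ : ℕ∞) (fun p : T × T => φ x p.1 p.2) := by
    intro x
    have : (fun p : T × T => φ x p.1 p.2)
        = fun p : T × T => H x (K x p.1 + K (x + K x p.1) p.2) := by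
      funext p; exact hφ x p.1 p.2
    rw [this]
    exact (hHy x).comp (((hKy x).comp contDiff_fst).add
      (hKsmooth.comp ((contDiff_const.add ((hKy x).comp contDiff_fst)).prodMk contDiff_snd)))
  -- smoothness of φ x t
  have hφt : ∀ x t, ContDiff ℝ (⊤ : ℕ∞) (φ x t) := fun x t =>
    (hφ2 x).comp (contDiff_const.prodMk contDiff_id)
  have dH : ∀ y u, DifferentiableAt ℝ (H y) u := fun y u =>
    ((hHy y).differentiable (by simp)).differentiableAt
  have dK : ∀ y u, DifferentiableAt ℝ (K y) u := fun y u =>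
    ((hKy y).differentiable (by simp)).differentiableAt
  -- derivative of K y ∘ H y = id
  have hKH : ∀ y u w, fderiv ℝ (K y) (H y u) (fderiv ℝ (H y) u w) = w := by
    intro y u w
    have h1 : fderiv ℝ (K y ∘ H y) u = (fderiv ℝ (K y) (H y u)).comp (fderiv ℝ (H y) u) :=
      fderiv_comp u (dK y _) (dH y u)
    rw [(hinv y).1.comp_eq_id, fderiv_id] at h1
    have := congrArg (fun (L : T →L[ℝ] T) => L w) h1.symm
    simpa using this
  have hHK : ∀ y v w, fderiv ℝ (H y) (K y v) (fderiv ℝ (K y) v w) = w := by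
    intro y v w
    have h1 : fderiv ℝ (H y ∘ K y) v = (fderiv ℝ (H y) (K y v)).comp (fderiv ℝ (K y) v) :=
      fderiv_comp v (dH y _) (dK y v)
    rw [(hinv y).2.comp_eq_id, fderiv_id] at h1
    have := congrArg (fun (L : T →L[ℝ] T) => L w) h1.symm
    simpa using this
  -- formula for lam
  have lam_eq : ∀ y t, lam y t
      = (fderiv ℝ (H y) (K y t)).comp (fderiv ℝ (K (y + K y t)) 0) := by
    intro y t
    rw [hlam]
    have h2 : (fun t' => φ y t t') = (H y) ∘ (fun t' => K y t + K (y + K y t) t') :=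
      funext fun t' => hφ y t t'
    rw [h2, fderiv_comp 0 (dH y _) (show DifferentiableAt ℝ (fun t' => K y t + K (y + K y t) t') 0 from (differentiableAt_const _).add (dK _ 0))]
    rw [fderiv_const_add]
    norm_num [hK0]
  -- lam y t has the explicit two-sided inverse v ↦ DH_{y'}(0) (DK_y(t) v)
  have lam_Rmap : ∀ y t v,
      lam y t (fderiv ℝ (H (y + K y t)) 0 (fderiv ℝ (K y) t v)) = v := by
    intro y t v
    rw [lam_eq]
    simp only [ContinuousLinearMap.comp_apply]
    have e1 : fderiv ℝ (K (y + K y t)) 0 (fderiv ℝ (H (y + K y t)) 0 (fderiv ℝ (K y) t v))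
        = fderiv ℝ (K y) t v := by
      have := hKH (y + K y t) 0 (fderiv ℝ (K y) t v)
      rwa [hH0] at this
    rw [e1, hHK]
  have Rmap_lam : ∀ y t w,
      fderiv ℝ (H (y + K y t)) 0 (fderiv ℝ (K y) t (lam y t w)) = w := by
    intro y t w
    rw [lam_eq]
    simp only [ContinuousLinearMap.comp_apply]
    have e1 : fderiv ℝ (K y) t (fderiv ℝ (H y) (K y t) (fderiv ℝ (K (y + K y t)) 0 w))
        = fderiv ℝ (K (y + K y t)) 0 w := by
      have := hKH y (K y t) (fderiv ℝ (K (y + K y t)) 0 w)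
      rwa [(hinv y).2 t] at this
    rw [e1]
    have := hHK (y + K y t) 0 w
    rwa [hK0] at this
  have dφ : ∀ x t u, DifferentiableAt ℝ (φ x t) u := fun x t u =>
    ((hφt x t).differentiable (by simp)).differentiableAt
  -- associativity of the deformed group multiplication
  have assoc : ∀ x t t' t'', φ x t (φ (x + K x t) t' t'') = φ x (φ x t t') t'' := by
    intro x t t' t''
    have hKφ : ∀ y a b, K y (φ y a b) = K y a + K (y + K y a) b := by
      intro y a b; rw [hφ]; exact (hinv y).1 _
    rw [hφ x t (φ (x + K x t) t' t''), hKφ, hφ x (φ x t t') t'', hKφ, ← add_assoc x (K x t)]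
    exact congrArg (H x) (by abel)
  -- the chain-rule identity (I)
  have chainI : ∀ x t t', lam x (φ x t t')
      = (fderiv ℝ (φ x t) t').comp (lam (x + K x t) t') := by
    intro x t t'
    have hfun : (fun t'' => φ x (φ x t t') t'') = (φ x t) ∘ (φ (x + K x t) t') :=
      funext fun t'' => (assoc x t t' t'').symm
    rw [hlam, hfun, fderiv_comp 0 (by rw [hφt0]; exact dφ x t t') (dφ _ t' 0),
      hφt0, ← hlam]
  -- key identity: the derivative ∂'φ_x(sτ, ·) is constant along the geodesic parameter
  have key1 : ∀ (x τ : T) (s s' : ℝ),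
      fderiv ℝ (φ x (s • τ)) (s' • τfun x τ s) = lam x (s • τ) := by
    intro x τ s s'
    ext v
    have hI := chainI x (s • τ) (s' • τfun x τ s)
    rw [hcan x τ s s'] at hI
    have hLθ : lam (x + K x (s • τ)) (s' • τfun x τ s)
        (fderiv ℝ (H ((x + K x (s • τ)) + K (x + K x (s • τ)) (s' • τfun x τ s))) 0
          (fderiv ℝ (K (x + K x (s • τ))) (s' • τfun x τ s) v)) = v :=
      lam_Rmap _ _ v
    set θ := fderiv ℝ (H ((x + K x (s • τ)) + K (x + K x (s • τ)) (s' • τfun x τ s))) 0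
      (fderiv ℝ (K (x + K x (s • τ))) (s' • τfun x τ s) v) with hθ
    calc fderiv ℝ (φ x (s • τ)) (s' • τfun x τ s) v
        = fderiv ℝ (φ x (s • τ)) (s' • τfun x τ s)
            (lam (x + K x (s • τ)) (s' • τfun x τ s) θ) := by rw [hLθ]
      _ = ((fderiv ℝ (φ x (s • τ)) (s' • τfun x τ s)).comp
            (lam (x + K x (s • τ)) (s' • τfun x τ s))) θ := rfl
      _ = lam x ((s + s') • τ) θ := by rw [← hI]
      _ = lam x (s • τ) (lam (x + K x (s • τ)) (s' • τfun x τ s) θ) := hcomp x τ s s' θ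
      _ = lam x (s • τ) v := by rw [hLθ]
  -- second derivative in t' annihilates τfun x τ s
  have key2 : ∀ (x τ : T) (s : ℝ),
      (fderiv ℝ (fun t' => fderiv ℝ (fun u => φ x (s • τ) u) t') 0) (τfun x τ s) = 0 := by
    intro x τ s
    have dF : DifferentiableAt ℝ (fderiv ℝ (φ x (s • τ))) 0 :=
      (((hφt x (s • τ)).fderiv_right (m := 1) (WithTop.coe_le_coe.mpr le_top)).differentiable one_ne_zero).differentiableAt
    have hinner : HasDerivAt (fun s' : ℝ => s' • τfun x τ s) ((1:ℝ) • τfun x τ s) 0 :=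
      (hasDerivAt_id (0:ℝ)).smul_const (τfun x τ s)
    have hF : HasFDerivAt (fderiv ℝ (φ x (s • τ)))
        (fderiv ℝ (fderiv ℝ (φ x (s • τ))) 0) ((0:ℝ) • τfun x τ s) := by
      rw [zero_smul]; exact dF.hasFDerivAt
    have hg : HasDerivAt (fun s' : ℝ => fderiv ℝ (φ x (s • τ)) (s' • τfun x τ s))
        (fderiv ℝ (fderiv ℝ (φ x (s • τ))) 0 ((1:ℝ) • τfun x τ s)) 0 :=
      hF.comp_hasDerivAt 0 hinner
    have hgconst : (fun s' : ℝ => fderiv ℝ (φ x (s • τ)) (s' • τfun x τ s))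
        = fun _ => lam x (s • τ) := funext fun s' => key1 x τ s s'
    rw [hgconst] at hg
    have := hg.unique (hasDerivAt_const 0 _)
    rw [one_smul] at this
    exact this
  -- explicit formula for τfun
  have τfun_eq : ∀ (x τ : T) (s : ℝ), τfun x τ s
      = fderiv ℝ (H (x + K x (s • τ))) 0 (fderiv ℝ (K x) (s • τ) τ) := by
    intro x τ s
    have := Rmap_lam x (s • τ) (τfun x τ s)
    rw [hτfun] at this
    exact this.symm
  -- smoothness of Mx := t ↦ ∂'²φ_x(t,0)
  have hMsmooth : ∀ x, ContDiff ℝ 1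
      (fun t => fderiv ℝ (fun t' => fderiv ℝ (fun u => φ x t u) t') 0) := by
    intro x
    have hG : ContDiff ℝ (⊤ : ℕ∞) (fun p : T × T => fderiv ℝ (φ x p.1) p.2) := by
      apply ContDiff.fderiv (f := fun (p : T × T) (u : T) => φ x p.1 u)
        (g := fun p : T × T => p.2) (m := (⊤ : ℕ∞))
      · exact (hφ2 x).comp ((contDiff_fst.comp contDiff_fst).prodMk contDiff_snd)
      · exact contDiff_snd
      · exact (by simp)
    exact ContDiff.fderiv (f := fun t t' => fderiv ℝ (φ x t) t')
      (g := fun _ : T => (0 : T)) hG contDiff_const (WithTop.coe_le_coe.mpr le_top)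
  intro x t0 l0 l0'
  -- differentiability of Mx at 0
  have hMdiff : DifferentiableAt ℝ
      (fun t => fderiv ℝ (fun t' => fderiv ℝ (fun u => φ x t u) t') 0) 0 :=
    ((hMsmooth x).differentiable one_ne_zero).differentiableAt
  -- key5 : ρ in terms of DM := fderiv Mx 0
  have key5 : ∀ l a b, ρ x l a b =
      ((fderiv ℝ (fun t => fderiv ℝ (fun t' => fderiv ℝ (fun u => φ x t u) t') 0) 0) l a) b := by
    intro l a b
    rw [hρ]
    have h1 := (hMdiff.hasFDerivAt.clm_apply (hasFDerivAt_const a (0:T))).clm_apply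
      (hasFDerivAt_const b (0:T))
    rw [h1.fderiv]
    simp
  -- τfun x a 0 = a
  have τfun0 : ∀ (x a : T), τfun x a 0 = a := by
    intro x a
    rw [τfun_eq x a 0, zero_smul, hK0, add_zero]
    have := hHK x 0 a
    rwa [hK0] at this
  -- key3 : Mx 0 = 0
  have key3 : (fderiv ℝ (fun t' => fderiv ℝ (fun u => φ x (0:T) u) t') 0)
      = (0 : T →L[ℝ] T →L[ℝ] T) := by
    ext a
    have h := key2 x a 0
    rw [zero_smul, τfun0] at h
    simp [h]
  -- key4 : diagonal of DM vanishes
  have key4 : ∀ τ : T,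
      (fderiv ℝ (fun t => fderiv ℝ (fun t' => fderiv ℝ (fun u => φ x t u) t') 0) 0) τ τ
        = (0 : T →L[ℝ] T) := by
    intro τ
    -- derivative of s ↦ Mx (s • τ)
    have hsm : HasDerivAt (fun s : ℝ => s • τ) ((1:ℝ) • τ) 0 :=
      (hasDerivAt_id (0:ℝ)).smul_const τ
    have hF : HasFDerivAt (fun t => fderiv ℝ (fun t' => fderiv ℝ (fun u => φ x t u) t') 0)
        (fderiv ℝ (fun t => fderiv ℝ (fun t' => fderiv ℝ (fun u => φ x t u) t') 0) 0)
        ((0:ℝ) • τ) := by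
      rw [zero_smul]; exact hMdiff.hasFDerivAt
    have hu : HasDerivAt
        (fun s : ℝ => fderiv ℝ (fun t' => fderiv ℝ (fun u => φ x (s • τ) u) t') 0)
        ((fderiv ℝ (fun t => fderiv ℝ (fun t' => fderiv ℝ (fun u => φ x t u) t') 0) 0)
          ((1:ℝ) • τ)) 0 := by
      have := hF.comp_hasDerivAt 0 hsm; exact this
    -- differentiability of σ
    have hy : ContDiff ℝ 1 (fun y => fderiv ℝ (H y) 0) :=
      ContDiff.fderiv (f := H) (g := fun _ : T => (0:T)) hHsmooth contDiff_const (WithTop.coe_le_coe.mpr le_top)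
    have hsx : ContDiff ℝ 1 (fun s : ℝ => x + K x (s • τ)) :=
      contDiff_const.add (((hKy x).of_le (by simp)).comp (contDiff_id.smul contDiff_const))
    have hc : DifferentiableAt ℝ (fun s : ℝ => fderiv ℝ (H (x + K x (s • τ))) 0) 0 :=
      (((hy.comp hsx).differentiable one_ne_zero) 0)
    have hw : DifferentiableAt ℝ (fun s : ℝ => fderiv ℝ (K x) (s • τ) τ) 0 := by
      have h1 : ContDiff ℝ 1 (fun s : ℝ => fderiv ℝ (K x) (s • τ)) :=
        ((hKy x).fderiv_right (WithTop.coe_le_coe.mpr le_top)).comp (contDiff_id.smul contDiff_const)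
      exact ((h1.differentiable one_ne_zero) 0).clm_apply (differentiableAt_const τ)
    have hσ : HasDerivAt
        (fun s : ℝ => fderiv ℝ (H (x + K x (s • τ))) 0 (fderiv ℝ (K x) (s • τ) τ))
        (deriv (fun s : ℝ => fderiv ℝ (H (x + K x (s • τ))) 0 (fderiv ℝ (K x) (s • τ) τ)) 0)
        0 := (hc.clm_apply hw).hasDerivAt
    have hΨ := hu.clm_apply hσ
    have hconst : (fun s : ℝ =>
        (fderiv ℝ (fun t' => fderiv ℝ (fun u => φ x (s • τ) u) t') 0)
          (fderiv ℝ (H (x + K x (s • τ))) 0 (fderiv ℝ (K x) (s • τ) τ)))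
        = fun _ => (0 : T →L[ℝ] T) := by
      funext s
      rw [← τfun_eq x τ s]
      exact key2 x τ s
    rw [hconst] at hΨ
    have h0 := hΨ.unique (hasDerivAt_const 0 0)
    -- evaluate: σ 0 = τ, Mx 0 = 0
    have hσ0 : fderiv ℝ (H (x + K x ((0:ℝ) • τ))) 0 (fderiv ℝ (K x) ((0:ℝ) • τ) τ) = τ := by
      rw [← τfun_eq x τ 0, τfun0]
    rw [hσ0, zero_smul, key3, one_smul] at h0
    simpa using h0
  -- symmetry of ρ in the last two slots
  have symm23 : ∀ l a b, ρ x l a b = ρ x l b a := by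
    intro l a b
    have hsym : (fun t : T => ((fderiv ℝ (fun t' => fderiv ℝ (fun u => φ x t u) t') 0) a) b)
        = (fun t : T => ((fderiv ℝ (fun t' => fderiv ℝ (fun u => φ x t u) t') 0) b) a) := by
      funext t1
      have dF : DifferentiableAt ℝ (fderiv ℝ (φ x t1)) 0 :=
        (((hφt x t1).fderiv_right (m := 1) (WithTop.coe_le_coe.mpr le_top)).differentiable one_ne_zero).differentiableAt
      have hx2 : HasFDerivAt (fderiv ℝ (φ x t1))
          (fderiv ℝ (fun t' => fderiv ℝ (fun u => φ x t1 u) t') 0) 0 := dF.hasFDerivAt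
      exact second_derivative_symmetric (fun y => (dφ x t1 y).hasFDerivAt) hx2 a b
    rw [hρ, hρ, hsym]
  -- the curvature tensor: DM is antisymmetric in slots (1,2) and symmetric in (2,3), hence 0
  have P : ∀ a b : T,
      (fderiv ℝ (fun t => fderiv ℝ (fun t' => fderiv ℝ (fun u => φ x t u) t') 0) 0) a b
      + (fderiv ℝ (fun t => fderiv ℝ (fun t' => fderiv ℝ (fun u => φ x t u) t') 0) 0) b a
      = 0 := by
    intro a b
    have h := key4 (a + b)
    rw [map_add] at h
    simp only [ContinuousLinearMap.add_apply, map_add] at h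
    rw [key4 a, key4 b] at h
    rw [← h]; abel
  have S : ∀ l a b : T,
      (fderiv ℝ (fun t => fderiv ℝ (fun t' => fderiv ℝ (fun u => φ x t u) t') 0) 0) l a b
      = (fderiv ℝ (fun t => fderiv ℝ (fun t' => fderiv ℝ (fun u => φ x t u) t') 0) 0) l b a := by
    intro l a b
    rw [← key5, ← key5, symm23]
  have P' : ∀ a b c : T,
      (fderiv ℝ (fun t => fderiv ℝ (fun t' => fderiv ℝ (fun u => φ x t u) t') 0) 0) a b c
      = -(fderiv ℝ (fun t => fderiv ℝ (fun t' => fderiv ℝ (fun u => φ x t u) t') 0) 0) b a c := by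
    intro a b c
    have := congrArg (fun L : T →L[ℝ] T => L c) (P a b)
    simp only [ContinuousLinearMap.add_apply, ContinuousLinearMap.zero_apply] at this
    exact eq_neg_of_add_eq_zero_left this
  have Z : ∀ l a b : T,
      (fderiv ℝ (fun t => fderiv ℝ (fun t' => fderiv ℝ (fun u => φ x t u) t') 0) 0) l a b
      = 0 := by
    intro l a b
    have h1 : (fderiv ℝ (fun t => fderiv ℝ (fun t' => fderiv ℝ (fun u => φ x t u) t') 0) 0) l a b
        = -(fderiv ℝ (fun t => fderiv ℝ (fun t' => fderiv ℝ (fun u => φ x t u) t') 0) 0) l a b := by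
      calc (fderiv ℝ (fun t => fderiv ℝ (fun t' => fderiv ℝ (fun u => φ x t u) t') 0) 0) l a b
          = (fderiv ℝ (fun t => fderiv ℝ (fun t' => fderiv ℝ (fun u => φ x t u) t') 0) 0) l b a := S l a b
        _ = -(fderiv ℝ (fun t => fderiv ℝ (fun t' => fderiv ℝ (fun u => φ x t u) t') 0) 0) b l a := P' l b a
        _ = -(fderiv ℝ (fun t => fderiv ℝ (fun t' => fderiv ℝ (fun u => φ x t u) t') 0) 0) b a l := by rw [S b l a]
        _ = (fderiv ℝ (fun t => fderiv ℝ (fun t' => fderiv ℝ (fun u => φ x t u) t') 0) 0) a b l := by rw [P' a b l]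
        _ = (fderiv ℝ (fun t => fderiv ℝ (fun t' => fderiv ℝ (fun u => φ x t u) t') 0) 0) a l b := S a b l
        _ = -(fderiv ℝ (fun t => fderiv ℝ (fun t' => fderiv ℝ (fun u => φ x t u) t') 0) 0) l a b := P' a l b
    have h2 : (fderiv ℝ (fun t => fderiv ℝ (fun t' => fderiv ℝ (fun u => φ x t u) t') 0) 0) l a b
        + (fderiv ℝ (fun t => fderiv ℝ (fun t' => fderiv ℝ (fun u => φ x t u) t') 0) 0) l a b = 0 :=
      add_eq_zero_iff_eq_neg.mpr h1
    have h3 : (2:ℝ) • ((fderiv ℝ (fun t => fderiv ℝ (fun t' => fderiv ℝ (fun u => φ x t u) t') 0) 0) l a b) = 0 := by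
      rw [two_smul]; exact h2
    exact (smul_eq_zero.mp h3).resolve_left two_ne_zero
  rw [key5, key5, Z, Z, sub_zero]
end
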